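/- arXiv:2203.00616 — 2 statements merged into one kernel-verified Lean document; each statement's English description precedes it below -/
import Mathlib

section
/- For every k ≥ 2 and i ∈ {0,...,m}, the Vietoris-Rips complex of (S,h*) at scale k + i/N equals the Vietoris-Rips complex of (S,h) at scale k restricted as follows: a nonempty subset σ ⊆ S lies in V_{k+i/N}(S,h*) if and only if for all distinct x,y ∈ σ, either h(x,y) ≤ k-1, or (h(x,y) = k and max(D(x),D(y)) ≤ i). -/
/-- The Vietoris-Rips complex of the points of `T` with distance `d` at scale `r`:
nonempty finite subsets of `T` whose points are pairwise at distance `≤ r`. -/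
def VR {S : Type*} [DecidableEq S] (d : S → S → ℝ) (T : Set S) (r : ℝ) :
    Set (Finset S) :=
  {σ | σ.Nonempty ∧ ↑σ ⊆ T ∧ ∀ x ∈ σ, ∀ y ∈ σ, d x y ≤ r}

/-!
Since `D` takes values in `{0, …, m}` and `m < N`, the fractional part `max (D x) (D y) / N`
of `h*(x, y)` lies in `[0, 1)`, so comparing `h*(x, y)` with `k + i / N` is comparing the pairs
`(h x y, max (D x) (D y))` and `(k, i)` lexicographically.
-/

theorem Nat.mul_add_le_mul_add_iff {a k M i N : ℕ} (hM : M < N) (hi : i < N) :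
    a * N + M ≤ k * N + i ↔ a < k ∨ a = k ∧ M ≤ i := by
  constructor
  · intro hle
    rcases lt_trichotomy a k with hlt | rfl | hgt
    · exact Or.inl hlt
    · exact Or.inr ⟨rfl, by omega⟩
    · have : (k + 1) * N ≤ a * N := Nat.mul_le_mul_right N hgt
      nlinarith
  · rintro (hlt | ⟨rfl, hMi⟩)
    · have : (a + 1) * N ≤ k * N := Nat.mul_le_mul_right N hlt
      nlinarith
    · omega

theorem Nat.cast_add_div_le_cast_add_div_iff {a k M i N : ℕ} (hM : M < N) (hi : i < N) :
    (a + M / N : ℝ) ≤ k + i / N ↔ a < k ∨ a = k ∧ M ≤ i := by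
  have hN : (0 : ℝ) < N := by exact_mod_cast (Nat.zero_le M).trans_lt hM
  rw [← Nat.mul_add_le_mul_add_iff hM hi, ← @Nat.cast_le ℝ,
    ← div_le_div_iff_of_pos_right hN]
  push_cast
  field_simp

theorem mem_VR_univ_iff_of_diag_le {S : Type*} [DecidableEq S] {d : S → S → ℝ} {r : ℝ}
    (hdiag : ∀ x, d x x ≤ r) {σ : Finset S} :
    σ ∈ VR d Set.univ r ↔ σ.Nonempty ∧ ∀ x ∈ σ, ∀ y ∈ σ, x ≠ y → d x y ≤ r := by
  refine ⟨fun ⟨hne, _, hpair⟩ => ⟨hne, fun x hx y hy _ => hpair x hx y hy⟩,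
    fun ⟨hne, hpair⟩ => ⟨hne, Set.subset_univ _, fun x hx y hy => ?_⟩⟩
  obtain rfl | hxy := eq_or_ne x y
  · exact hdiag x
  · exact hpair x hx y hy hxy

theorem VR_hstar_mem_iff_general
{S : Type*} [DecidableEq S]
    (m N : ℕ) (hmN : m < N)
    (Sf : ℕ → Set S) (htop : Sf m = Set.univ)
    (h : S → S → ℕ)
    (D : S → ℕ) (hD : ∀ x i, x ∈ Sf i ↔ D x ≤ i)
    (hstar : S → S → ℝ)
    (hstarDef : ∀ x y, x ≠ y →
      hstar x y = (h x y : ℝ) + (max (D x) (D y) : ℝ) / (N : ℝ))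
    (hstarDiag : ∀ x, hstar x x = 0) :
    ∀ k : ℕ, 2 ≤ k → ∀ i, i ≤ m → ∀ σ : Finset S,
      (σ ∈ VR hstar Set.univ ((k : ℝ) + (i : ℝ) / (N : ℝ)) ↔
        σ.Nonempty ∧ ∀ x ∈ σ, ∀ y ∈ σ, x ≠ y →
          (h x y ≤ k - 1 ∨ (h x y = k ∧ max (D x) (D y) ≤ i))) := by
  intro k hk i hi σ
  have hDN : ∀ x, D x < N := fun x => ((hD x m).1 (htop ▸ Set.mem_univ x)).trans_lt hmN
  have hdiag : ∀ x, hstar x x ≤ k + i / N := fun x => by rw [hstarDiag]; positivity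
  rw [mem_VR_univ_iff_of_diag_le hdiag]
  refine and_congr_right fun _ => forall₄_congr fun x _ y _ => forall_congr' fun hxy => ?_
  rw [hstarDef x y hxy, ← Nat.cast_max,
    Nat.cast_add_div_le_cast_add_div_iff (max_lt (hDN x) (hDN y)) (hi.trans_lt hmN)]
  omega

/-- For `k ≥ 2` and `i ≤ m`: `σ ∈ V_{k+i/N}(S, h*)` iff `σ` is nonempty and
for all distinct `x, y ∈ σ`, either `h(x,y) ≤ k-1`, or `h(x,y) = k` and
`max(D x, D y) ≤ i`. -/
theorem VR_hstar_mem_iff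
{S : Type*} [Fintype S] [DecidableEq S]
    (m N : ℕ) (hNpow : ∃ k, N = 10 ^ k) (hmN : m < N)
    (hNmin : ∀ k, m < 10 ^ k → N ≤ 10 ^ k)
    (Sf : ℕ → Set S) (hmono : Monotone Sf) (htop : Sf m = Set.univ)
    (h : S → S → ℕ) (hsymm : ∀ x y, h x y = h y x)
    (hzero : ∀ x y, h x y = 0 ↔ x = y)
    (D : S → ℕ) (hD : ∀ x i, x ∈ Sf i ↔ D x ≤ i)
    (hstar : S → S → ℝ)
    (hstarDef : ∀ x y, x ≠ y →
      hstar x y = (h x y : ℝ) + (max (D x) (D y) : ℝ) / (N : ℝ))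
    (hstarDiag : ∀ x, hstar x x = 0) :
    ∀ k : ℕ, 2 ≤ k → ∀ i, i ≤ m → ∀ σ : Finset S,
      (σ ∈ VR hstar Set.univ ((k : ℝ) + (i : ℝ) / (N : ℝ)) ↔
        σ.Nonempty ∧ ∀ x ∈ σ, ∀ y ∈ σ, x ≠ y →
          (h x y ≤ k - 1 ∨ (h x y = k ∧ max (D x) (D y) ≤ i))) :=
  VR_hstar_mem_iff_general m N hmN Sf htop h D hD hstar hstarDef hstarDiag
end

section
/- Provided h(x,y) ≥ 1 for x ≠ y, for distinct x,y the deformed distance satisfies h*(x,y) ∈ { k + j/N : k ∈ ℕ_{≥1}, j ∈ {0,...,m} }. Consequently, the Vietoris-Rips filtration of (S,h*) changes only at the scales κ_i, i.e., V_r(S,h*) = V_{κ_i}(S,h*) for all r ∈ [κ_i, κ_{i+1}). -/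
lemma real_form {N : ℕ} (hN : (0:ℝ) < (N:ℝ)) (k l : ℕ) :
    (k:ℝ) + (l:ℝ)/(N:ℝ) = ((k*N + l : ℕ) : ℝ)/(N:ℝ) := by
  push_cast
  field_simp

lemma nat_lt_of_real {N : ℕ} (hN : (0:ℝ) < (N:ℝ)) {k l a b : ℕ}
    (H : (k:ℝ) + (l:ℝ)/(N:ℝ) < (a:ℝ) + (b:ℝ)/(N:ℝ)) : k*N + l < a*N + b := by
  rw [real_form hN, real_form hN, div_lt_div_iff_of_pos_right hN, Nat.cast_lt] at H
  exact H

lemma real_le_of_nat {N : ℕ} (hN : (0:ℝ) < (N:ℝ)) {k l a b : ℕ}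
    (H : k*N + l ≤ a*N + b) : (k:ℝ) + (l:ℝ)/(N:ℝ) ≤ (a:ℝ) + (b:ℝ)/(N:ℝ) := by
  rw [real_form hN, real_form hN, div_le_div_iff_of_pos_right hN, Nat.cast_le]
  exact H

/-- On distinct points `h*` takes values of the form `k + j/N` with `k ≥ 1` and
`j ≤ m`; consequently the Vietoris-Rips filtration of `(S, h*)` changes only at the
scales `κ_i`: `V_r(S, h*) = V_{κ_i}(S, h*)` for `r ∈ [κ_i, κ_{i+1})`. -/
theorem hstar_range_and_constancy
{S : Type*} [Fintype S] [DecidableEq S]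
    (m N : ℕ) (hNpow : ∃ k, N = 10 ^ k) (hmN : m < N)
    (hNmin : ∀ k, m < 10 ^ k → N ≤ 10 ^ k)
    (Sf : ℕ → Set S) (hmono : Monotone Sf) (htop : Sf m = Set.univ)
    (h : S → S → ℕ) (hsymm : ∀ x y, h x y = h y x)
    (hzero : ∀ x y, h x y = 0 ↔ x = y)
    (D : S → ℕ) (hD : ∀ x i, x ∈ Sf i ↔ D x ≤ i)
    (hstar : S → S → ℝ)
    (hstarDef : ∀ x y, x ≠ y →
      hstar x y = (h x y : ℝ) + (max (D x) (D y) : ℝ) / (N : ℝ))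
    (hstarDiag : ∀ x, hstar x x = 0)
    (hDm : ∀ x, D x ≤ m)
    (κ : ℕ → ℝ) (hκzero : κ 0 = 0)
    (hκ : ∀ i : ℕ, κ (i + 1) = ((i / (m + 1) : ℕ) : ℝ) + 1 + ((i % (m + 1) : ℕ) : ℝ) / (N : ℝ)) :
    (∀ x y, x ≠ y → ∃ k j : ℕ, 1 ≤ k ∧ j ≤ m ∧
        hstar x y = (k : ℝ) + (j : ℝ) / (N : ℝ)) ∧
      (∀ i : ℕ, ∀ r : ℝ, κ i ≤ r → r < κ (i + 1) →
        VR hstar Set.univ r = VR hstar Set.univ (κ i)) := by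
  have hN0 : 0 < N := lt_of_le_of_lt (Nat.zero_le m) hmN
  have hNR : (0:ℝ) < (N:ℝ) := by exact_mod_cast hN0
  have part1 : ∀ x y, x ≠ y → ∃ k j : ℕ, 1 ≤ k ∧ j ≤ m ∧
      hstar x y = (k : ℝ) + (j : ℝ) / (N : ℝ) := by
    intro x y hxy
    refine ⟨h x y, max (D x) (D y), ?_, ?_, ?_⟩
    · exact Nat.one_le_iff_ne_zero.mpr (fun h0 => hxy ((hzero x y).mp h0))
    · exact max_le (hDm x) (hDm y)
    · rw [hstarDef x y hxy]
      push_cast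
      ring
  refine ⟨part1, ?_⟩
  intro i r hri hrκ
  -- key: for all x y, hstar x y ≤ r ↔ hstar x y ≤ κ i
  have key : ∀ x y : S, hstar x y ≤ r ↔ hstar x y ≤ κ i := by
    intro x y
    constructor
    · intro hle
      by_cases hxy : x = y
      · subst hxy
        rw [hstarDiag]
        cases i with
        | zero => rw [hκzero]
        | succ i' => rw [hκ i']; positivity
      · obtain ⟨k, l, hk, hl, heq⟩ := part1 x y hxy
        rw [heq] at hle ⊢
        have hlt : (k:ℝ) + (l:ℝ)/(N:ℝ) < κ (i+1) := lt_of_le_of_lt hle hrκ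
        cases i with
        | zero =>
          exfalso
          rw [hκ 0] at hlt
          simp only [Nat.zero_div, Nat.zero_mod, Nat.cast_zero, zero_div, zero_add] at hlt
          have h1 : (1:ℝ) ≤ (k:ℝ) := by exact_mod_cast hk
          have h2 : (0:ℝ) ≤ (l:ℝ)/(N:ℝ) := by positivity
          linarith
        | succ i' =>
          set q₁ := i' / (m+1) with hq₁
          set j₁ := i' % (m+1) with hj₁
          have hj₁m : j₁ < m + 1 := Nat.mod_lt _ (Nat.succ_pos m)
          have hdm : i' = q₁ * (m+1) + j₁ := by
            rw [hq₁, hj₁, Nat.mul_comm]; exact (Nat.div_add_mod i' (m+1)).symm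
          rw [hκ (i'+1)] at hlt
          rw [hκ i']
          -- rewrite κ i' + 1 as (q₁+1) + j₁/N
          have target : (k:ℝ) + (l:ℝ)/(N:ℝ) ≤ ((q₁+1:ℕ):ℝ) + ((j₁:ℕ):ℝ)/(N:ℝ) := by
            by_cases hcase : j₁ = m
            · -- i'+1 ≡ 0 mod (m+1), quotient q₁+1
              have hi : i' + 1 = (q₁ + 1) * (m+1) := by
                rw [hdm, hcase]; ring
              have hdiv : (i'+1) / (m+1) = q₁ + 1 := by
                rw [hi, Nat.mul_div_cancel _ (Nat.succ_pos m)]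
              have hmod : (i'+1) % (m+1) = 0 := by
                rw [hi, Nat.mul_mod_left]
              rw [hdiv, hmod] at hlt
              push_cast at hlt
              have hnat : k * N + l < ((q₁+1)+1) * N + 0 := by
                apply nat_lt_of_real hNR
                push_cast
                convert hlt using 2 <;> push_cast <;> ring
              have hkle : k ≤ q₁ + 1 := by
                have : k * N < ((q₁+1)+1) * N := lt_of_le_of_lt (Nat.le_add_right _ _) hnat
                have := Nat.lt_of_mul_lt_mul_right this
                omega
              apply real_le_of_nat hNR
              calc k * N + l ≤ (q₁+1) * N + l := by
                    exact Nat.add_le_add_right (Nat.mul_le_mul_right N hkle) l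
                _ ≤ (q₁+1) * N + j₁ := by omega
            · -- j₁ < m, so i'+1 has quotient q₁ and remainder j₁+1
              have hj₁lt : j₁ + 1 < m + 1 := by omega
              have hi : i' + 1 = (j₁ + 1) + q₁ * (m+1) := by omega
              have hdiv : (i'+1) / (m+1) = q₁ := by
                rw [hi, Nat.add_mul_div_right _ _ (Nat.succ_pos m),
                  Nat.div_eq_of_lt hj₁lt, Nat.zero_add]
              have hmod : (i'+1) % (m+1) = j₁ + 1 := by
                rw [hi, Nat.add_mul_mod_self_right, Nat.mod_eq_of_lt hj₁lt]
              rw [hdiv, hmod] at hlt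
              have hnat : k * N + l < (q₁+1) * N + (j₁+1) := by
                apply nat_lt_of_real hNR
                push_cast
                convert hlt using 2 <;> push_cast <;> ring
              apply real_le_of_nat hNR
              omega
          calc (k:ℝ) + (l:ℝ)/(N:ℝ) ≤ ((q₁+1:ℕ):ℝ) + ((j₁:ℕ):ℝ)/(N:ℝ) := target
            _ = (q₁:ℝ) + 1 + (j₁:ℝ)/(N:ℝ) := by push_cast; ring
    · intro hle
      exact le_trans hle hri
  ext σ
  simp only [VR, Set.mem_setOf_eq]
  constructor
  · rintro ⟨h1, h2, h3⟩
    exact ⟨h1, h2, fun x hx y hy => (key x y).mp (h3 x hx y hy)⟩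
  · rintro ⟨h1, h2, h3⟩
    exact ⟨h1, h2, fun x hx y hy => (key x y).mpr (h3 x hx y hy)⟩
end
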